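/- Let r and r₀ be real numbers with r ≥ 1/2 and r₀ ≤ r + 1/2. Define G : ℕ³ → [0, ∞) by G(k, k₁, k₂) = χ[|k−k₂| ≤ 10]·((k₁+1)·2^{−r k₁} + max((k₁+1)·2^{k(1/2−2r) + k₁(r−1/2)}, 2^{(r₀−1/2−r)k₁})) + χ[|k−k₁| ≤ 10]·((k₂+1)·2^{−r k₂} + max((k₂+1)·2^{k(1/2−2r) + k₂(r−1/2)}, 2^{(r₀−1/2−r)k₂})) + χ[|k₁−k₂| ≤ 10]·((k+1)·2^{−r k} + max(2^{k₁(1/2−2r) + k(r−1/2)}, 2^{(r₀−r−1/2)k})), where χ[·] denotes the indicator of the stated condition. Then G satisfies property (G). -/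

import Mathlib

noncomputable section

open scoped ENNReal

/-- The condition that the two largest entries of the triple `(k, k₁, k₂)` differ
by at most 10 (i.e. `max ≤ med + 10`). -/
def nearMax (k k₁ k₂ : ℕ) : Prop :=
  max k (max k₁ k₂) ≤ (k + k₁ + k₂ - max k (max k₁ k₂) - min k (min k₁ k₂)) + 10

instance : ∀ k k₁ k₂, Decidable (nearMax k k₁ k₂) := fun _ _ _ => Nat.decLe _ _

/-- Property (G): the trilinear summation bound for a weight `G : ℕ³ → [0,∞)`,
restricted to triples whose two largest entries differ by at most 10.
The sum is taken in `ℝ≥0∞` so that it is always well defined. -/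
def propertyG (G : ℕ → ℕ → ℕ → ℝ) : Prop :=
  ∃ C : ℝ, ∀ a b c : ℕ → ℝ,
    (∀ n, 0 ≤ a n) → (∀ n, 0 ≤ b n) → (∀ n, 0 ≤ c n) →
    Summable (fun n => (a n) ^ 2) → Summable (fun n => (b n) ^ 2) →
    Summable (fun n => (c n) ^ 2) →
    (∑' p : ℕ × ℕ × ℕ,
        if nearMax p.1 p.2.1 p.2.2 then
          ENNReal.ofReal (G p.1 p.2.1 p.2.2 * a p.1 * b p.2.1 * c p.2.2 /
            ((min p.1 (min p.2.1 p.2.2) : ℝ) + 1) ^ 10)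
        else 0) ≤
      ENNReal.ofReal (C * Real.sqrt (∑' n, (a n) ^ 2) * Real.sqrt (∑' n, (b n) ^ 2) *
        Real.sqrt (∑' n, (c n) ^ 2))

/-- The weight from Proposition 4.2 (estimates for dyadic pieces, part 1). -/
def Gwt (r r₀ : ℝ) (k k₁ k₂ : ℕ) : ℝ :=
  (if |(k : ℤ) - (k₂ : ℤ)| ≤ 10 then
      ((k₁ : ℝ) + 1) * (2 : ℝ) ^ (-r * (k₁ : ℝ)) +
        max (((k₁ : ℝ) + 1) * (2 : ℝ) ^ ((k : ℝ) * (1 / 2 - 2 * r) + (k₁ : ℝ) * (r - 1 / 2)))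
          ((2 : ℝ) ^ ((r₀ - 1 / 2 - r) * (k₁ : ℝ)))
    else 0) +
  (if |(k : ℤ) - (k₁ : ℤ)| ≤ 10 then
      ((k₂ : ℝ) + 1) * (2 : ℝ) ^ (-r * (k₂ : ℝ)) +
        max (((k₂ : ℝ) + 1) * (2 : ℝ) ^ ((k : ℝ) * (1 / 2 - 2 * r) + (k₂ : ℝ) * (r - 1 / 2)))
          ((2 : ℝ) ^ ((r₀ - 1 / 2 - r) * (k₂ : ℝ)))
    else 0) +
  (if |(k₁ : ℤ) - (k₂ : ℤ)| ≤ 10 then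
      ((k : ℝ) + 1) * (2 : ℝ) ^ (-r * (k : ℝ)) +
        max ((2 : ℝ) ^ ((k₁ : ℝ) * (1 / 2 - 2 * r) + (k : ℝ) * (r - 1 / 2)))
          ((2 : ℝ) ^ ((r₀ - r - 1 / 2) * (k : ℝ)))
    else 0)

/-!
On triples whose two largest entries are within 10 of each other, `Gwt r r₀` is bounded:
every exponential factor decays at least like `2^(-n/2)` in an index `n` that dominates the
polynomial factor in front of it. For a bounded weight, the smallest index carries the
square-summable factor `(min + 1)^(-10)` and the other two indices lie in a band of width 10.
Cauchy–Schwarz in the smallest index, and on each of the finitely many shifted diagonals of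
the band, bounds the sum by `‖a‖ ‖b‖ ‖c‖`.
-/

open Finset

def ell2Norm (f : ℕ → ℝ≥0∞) : ℝ≥0∞ := (∑' n, f n ^ 2) ^ (1 / 2 : ℝ)

theorem tsum_mul_le_ell2Norm_mul (f g : ℕ → ℝ≥0∞) :
    ∑' n, f n * g n ≤ ell2Norm f * ell2Norm g := by
  have h := ENNReal.lintegral_mul_le_Lp_mul_Lq MeasureTheory.Measure.count
    Real.HolderConjugate.two_two (measurable_of_countable f).aemeasurable
    (measurable_of_countable g).aemeasurable
  simp only [MeasureTheory.lintegral_count, Pi.mul_apply, ENNReal.rpow_two] at h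
  exact h

theorem ell2Norm_comp_add_le (f : ℕ → ℝ≥0∞) (t : ℕ) :
    ell2Norm (fun n => f (n + t)) ≤ ell2Norm f :=
  ENNReal.rpow_le_rpow
    (ENNReal.tsum_comp_le_tsum_of_injective (add_left_injective t) (fun n => f n ^ 2))
    (by norm_num)

theorem ell2Norm_ofReal {f : ℕ → ℝ} (hf : ∀ n, 0 ≤ f n) (hf2 : Summable fun n => f n ^ 2) :
    ell2Norm (fun n => ENNReal.ofReal (f n)) = ENNReal.ofReal (Real.sqrt (∑' n, f n ^ 2)) := by
  rw [ell2Norm, Real.sqrt_eq_rpow,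
    ← ENNReal.ofReal_rpow_of_nonneg (tsum_nonneg fun n => sq_nonneg _) (by norm_num),
    ENNReal.ofReal_tsum_of_nonneg (fun n => sq_nonneg _) hf2]
  simp_rw [ENNReal.ofReal_pow (hf _)]

theorem tsum_diag_shift_le (f g : ℕ → ℝ≥0∞) (t : ℕ) :
    ∑' p : ℕ × ℕ, (if p.2 = p.1 + t then f p.1 * g p.2 else 0) ≤ ell2Norm f * ell2Norm g := by
  rw [ENNReal.tsum_prod']
  calc ∑' i, ∑' j, (if j = i + t then f i * g j else 0)
      = ∑' i, f i * g (i + t) := by simp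
    _ ≤ ell2Norm f * ell2Norm (fun n => g (n + t)) := tsum_mul_le_ell2Norm_mul _ _
    _ ≤ ell2Norm f * ell2Norm g := by gcongr; exact ell2Norm_comp_add_le g t

theorem tsum_band_le (d : ℕ) (f g : ℕ → ℝ≥0∞) :
    ∑' p : ℕ × ℕ, (if |(p.1 : ℤ) - p.2| ≤ d then f p.1 * g p.2 else 0) ≤
      (2 * d + 2) * (ell2Norm f * ell2Norm g) := by
  set diag := fun (t : ℕ) (p : ℕ × ℕ) => if p.2 = p.1 + t then f p.1 * g p.2 else 0
  set antidiag := fun (t : ℕ) (p : ℕ × ℕ) => if p.1 = p.2 + t then f p.1 * g p.2 else 0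
  have hcover : ∀ p : ℕ × ℕ, (if |(p.1 : ℤ) - p.2| ≤ d then f p.1 * g p.2 else 0) ≤
      ∑ t ∈ range (d + 1), (diag t p + antidiag t p) := by
    rintro ⟨i, j⟩
    split_ifs with h
    · rw [abs_le] at h
      rcases le_total i j with hij | hij
      · refine le_trans ?_ (single_le_sum (fun _ _ => zero_le)
          (mem_range.2 (show j - i < d + 1 by omega)))
        simp only [diag, if_pos (show j = i + (j - i) by omega)]
        exact le_self_add
      · refine le_trans ?_ (single_le_sum (fun _ _ => zero_le)
          (mem_range.2 (show i - j < d + 1 by omega)))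
        simp only [antidiag, if_pos (show i = j + (i - j) by omega)]
        exact le_add_self
    · exact zero_le
  have hanti : ∀ t, ∑' p, antidiag t p ≤ ell2Norm f * ell2Norm g := fun t => by
    rw [← (Equiv.prodComm ℕ ℕ).tsum_eq, mul_comm (ell2Norm f)]
    simpa only [antidiag, Equiv.prodComm_apply, Prod.fst_swap, Prod.snd_swap, mul_comm (f _)]
      using tsum_diag_shift_le g f t
  calc _ ≤ ∑' p, ∑ t ∈ range (d + 1), (diag t p + antidiag t p) := ENNReal.tsum_le_tsum hcover
    _ = ∑ t ∈ range (d + 1), ((∑' p, diag t p) + ∑' p, antidiag t p) := by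
      rw [Summable.tsum_finsetSum fun _ _ => ENNReal.summable]
      simp only [ENNReal.tsum_add]
    _ ≤ ∑ t ∈ range (d + 1), (ell2Norm f * ell2Norm g + ell2Norm f * ell2Norm g) :=
      sum_le_sum fun t _ => add_le_add (tsum_diag_shift_le f g t) (hanti t)
    _ = (2 * d + 2) * (ell2Norm f * ell2Norm g) := by
      rw [sum_const, card_range, nsmul_eq_mul]; push_cast; ring

theorem tsum_weighted_band_le (d : ℕ) (w f g h : ℕ → ℝ≥0∞) :
    ∑' p : ℕ × ℕ × ℕ,
        (if |(p.2.1 : ℤ) - p.2.2| ≤ d then w p.1 * f p.1 * g p.2.1 * h p.2.2 else 0) ≤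
      ell2Norm w * ell2Norm f * ((2 * d + 2) * (ell2Norm g * ell2Norm h)) := by
  calc _ = ∑' k, w k * f k *
        ∑' q : ℕ × ℕ, (if |(q.1 : ℤ) - q.2| ≤ d then g q.1 * h q.2 else 0) := by
        rw [ENNReal.tsum_prod']
        refine tsum_congr fun k => ?_
        rw [← ENNReal.tsum_mul_left]
        refine tsum_congr fun q => ?_
        split_ifs <;> simp only [mul_assoc, mul_zero]
    _ = (∑' k, w k * f k) *
        ∑' q : ℕ × ℕ, (if |(q.1 : ℤ) - q.2| ≤ d then g q.1 * h q.2 else 0) :=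
      ENNReal.tsum_mul_right
    _ ≤ _ := mul_le_mul' (tsum_mul_le_ell2Norm_mul w f) (tsum_band_le d g h)

theorem nearMax_cases {k k₁ k₂ : ℕ} (h : nearMax k k₁ k₂) :
    (min k (min k₁ k₂) = k ∧ |(k₁ : ℤ) - k₂| ≤ 10) ∨
    (min k (min k₁ k₂) = k₁ ∧ |(k : ℤ) - k₂| ≤ 10) ∨
    (min k (min k₁ k₂) = k₂ ∧ |(k : ℤ) - k₁| ≤ 10) := by
  unfold nearMax at h
  simp only [abs_le]
  omega

theorem tsum_nearMax_le (w f g h : ℕ → ℝ≥0∞) :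
    ∑' p : ℕ × ℕ × ℕ, (if nearMax p.1 p.2.1 p.2.2 then
        w (min p.1 (min p.2.1 p.2.2)) * f p.1 * g p.2.1 * h p.2.2 else 0) ≤
      66 * ell2Norm w * (ell2Norm f * ell2Norm g * ell2Norm h) := by
  set band := fun (f g h : ℕ → ℝ≥0∞) (p : ℕ × ℕ × ℕ) =>
    if |(p.2.1 : ℤ) - p.2.2| ≤ 10 then w p.1 * f p.1 * g p.2.1 * h p.2.2 else 0
  have hband : ∀ f g h, ∑' p, band f g h p ≤
      ell2Norm w * ell2Norm f * (22 * (ell2Norm g * ell2Norm h)) := fun f g h =>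
    (tsum_weighted_band_le 10 w f g h).trans_eq (by norm_num)
  let σ₂ : ℕ × ℕ × ℕ ≃ ℕ × ℕ × ℕ :=
    ⟨fun p => (p.2.1, p.1, p.2.2), fun p => (p.2.1, p.1, p.2.2), fun _ => rfl, fun _ => rfl⟩
  let σ₃ : ℕ × ℕ × ℕ ≃ ℕ × ℕ × ℕ :=
    ⟨fun p => (p.2.2, p.1, p.2.1), fun p => (p.2.1, p.2.2, p.1), fun _ => rfl, fun _ => rfl⟩
  have hcover : ∀ p : ℕ × ℕ × ℕ, (if nearMax p.1 p.2.1 p.2.2 then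
        w (min p.1 (min p.2.1 p.2.2)) * f p.1 * g p.2.1 * h p.2.2 else 0) ≤
      band f g h p + band g f h (σ₂ p) + band h f g (σ₃ p) := by
    rintro ⟨k, k₁, k₂⟩
    split_ifs with hn
    · rcases nearMax_cases hn with ⟨hm, hc⟩ | ⟨hm, hc⟩ | ⟨hm, hc⟩ <;>
        simp only [band, σ₂, σ₃, Equiv.coe_fn_mk, hm, if_pos hc]
      · exact le_add_right (le_add_right le_rfl)
      · exact le_add_right (le_add_left (le_of_eq (by ring)))
      · exact le_add_left (le_of_eq (by ring))
    · exact zero_le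
  calc _ ≤ ∑' p, (band f g h p + band g f h (σ₂ p) + band h f g (σ₃ p)) :=
        ENNReal.tsum_le_tsum hcover
    _ = ∑' p, band f g h p + ∑' p, band g f h p + ∑' p, band h f g p := by
        rw [ENNReal.tsum_add, ENNReal.tsum_add, σ₂.tsum_eq, σ₃.tsum_eq]
    _ ≤ ell2Norm w * ell2Norm f * (22 * (ell2Norm g * ell2Norm h)) +
          ell2Norm w * ell2Norm g * (22 * (ell2Norm f * ell2Norm h)) +
          ell2Norm w * ell2Norm h * (22 * (ell2Norm f * ell2Norm g)) :=
        add_le_add (add_le_add (hband f g h) (hband g f h)) (hband h f g)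
    _ = 66 * ell2Norm w * (ell2Norm f * ell2Norm g * ell2Norm h) := by ring

theorem summable_inv_succ_pow_sq :
    Summable fun n : ℕ => ((((n : ℝ) + 1) ^ 10)⁻¹) ^ 2 := by
  have h := (summable_nat_add_iff 1).mpr (Real.summable_nat_pow_inv.mpr (by norm_num : 1 < 20))
  refine h.congr fun n => ?_
  push_cast
  rw [inv_pow, ← pow_mul]

theorem propertyG_of_le_of_nearMax {G : ℕ → ℕ → ℕ → ℝ} (M : ℝ)
    (hG : ∀ k k₁ k₂, nearMax k k₁ k₂ → G k k₁ k₂ ≤ M) : propertyG G := by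
  set w : ℕ → ℝ≥0∞ := fun n => ENNReal.ofReal (((n : ℝ) + 1) ^ 10)⁻¹
  set K := Real.sqrt (∑' n : ℕ, ((((n : ℝ) + 1) ^ 10)⁻¹) ^ 2)
  refine ⟨M * 66 * K, fun a b c ha hb hc ha2 hb2 hc2 => ?_⟩
  set A := fun n => ENNReal.ofReal (a n)
  set B := fun n => ENNReal.ofReal (b n)
  set C := fun n => ENNReal.ofReal (c n)
  have hpt : ∀ p : ℕ × ℕ × ℕ, (if nearMax p.1 p.2.1 p.2.2 then
        ENNReal.ofReal (G p.1 p.2.1 p.2.2 * a p.1 * b p.2.1 * c p.2.2 /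
          ((min p.1 (min p.2.1 p.2.2) : ℝ) + 1) ^ 10) else 0) ≤
      ENNReal.ofReal M * (if nearMax p.1 p.2.1 p.2.2 then
        w (min p.1 (min p.2.1 p.2.2)) * A p.1 * B p.2.1 * C p.2.2 else 0) := by
    rintro ⟨k, k₁, k₂⟩
    split_ifs with hn
    · set x := (((min k (min k₁ k₂) : ℕ) : ℝ) + 1) ^ 10
      have hx : 0 ≤ x⁻¹ * a k * b k₁ * c k₂ := by
        have := ha k; have := hb k₁; have := hc k₂; positivity
      calc _ = ENNReal.ofReal (G k k₁ k₂ * (x⁻¹ * a k * b k₁ * c k₂)) := by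
            simp only [x, Nat.cast_min]; ring_nf
        _ ≤ ENNReal.ofReal (M * (x⁻¹ * a k * b k₁ * c k₂)) :=
            ENNReal.ofReal_le_ofReal (mul_le_mul_of_nonneg_right (hG k k₁ k₂ hn) hx)
        _ = _ := by
            rw [ENNReal.ofReal_mul' hx, ENNReal.ofReal_mul (mul_nonneg (mul_nonneg
              (by positivity) (ha k)) (hb k₁)), ENNReal.ofReal_mul (mul_nonneg (by positivity)
              (ha k)), ENNReal.ofReal_mul (by positivity)]
    · exact zero_le
  have hw : ell2Norm w = ENNReal.ofReal K :=
    ell2Norm_ofReal (fun n => by positivity) summable_inv_succ_pow_sq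
  calc _ ≤ ∑' p : ℕ × ℕ × ℕ, ENNReal.ofReal M * (if nearMax p.1 p.2.1 p.2.2 then
          w (min p.1 (min p.2.1 p.2.2)) * A p.1 * B p.2.1 * C p.2.2 else 0) :=
        ENNReal.tsum_le_tsum hpt
    _ ≤ ENNReal.ofReal M * (66 * ell2Norm w * (ell2Norm A * ell2Norm B * ell2Norm C)) := by
        rw [ENNReal.tsum_mul_left]
        gcongr
        exact tsum_nearMax_le w A B C
    _ = _ := by
        rw [hw, ell2Norm_ofReal ha ha2, ell2Norm_ofReal hb hb2, ell2Norm_ofReal hc hc2,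
          mul_assoc (M * 66 * K), mul_assoc (M * 66 * K), mul_assoc (M * 66), mul_assoc M,
          ENNReal.ofReal_mul' (by positivity), ENNReal.ofReal_mul (by norm_num),
          ENNReal.ofReal_mul (by positivity), ENNReal.ofReal_mul (by positivity),
          ENNReal.ofReal_mul (by positivity)]
        norm_num [mul_assoc]

theorem add_one_mul_two_rpow_neg_half_le {x : ℝ} (hx : 0 ≤ x) :
    (x + 1) * (2 : ℝ) ^ (-x / 2) ≤ 3 := by
  have hlog : 2 / 3 < Real.log 2 := by linarith [Real.log_two_gt_d9]
  have hexp : 1 + x / 3 ≤ (2 : ℝ) ^ (x / 2) := by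
    rw [Real.rpow_def_of_pos two_pos]
    nlinarith [Real.add_one_le_exp (Real.log 2 * (x / 2))]
  rw [neg_div, Real.rpow_neg (by norm_num : (0 : ℝ) ≤ 2), mul_inv_le_iff₀ (by positivity)]
  linarith

theorem succ_mul_two_rpow_le {m n : ℕ} (hmn : m ≤ n + 20) {e c : ℝ} (he : e ≤ -n / 2 + c) :
    ((m : ℝ) + 1) * (2 : ℝ) ^ e ≤ 63 * (2 : ℝ) ^ c := by
  have hmn' : (m : ℝ) + 1 ≤ 21 * ((n : ℝ) + 1) := by
    have : (m : ℝ) ≤ n + 20 := by exact_mod_cast hmn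
    linarith [n.cast_nonneg (α := ℝ)]
  calc ((m : ℝ) + 1) * (2 : ℝ) ^ e ≤ 21 * ((n : ℝ) + 1) * (2 : ℝ) ^ (-n / 2 + c) := by
        gcongr; exact one_le_two
    _ = 21 * (((n : ℝ) + 1) * (2 : ℝ) ^ (-n / 2 : ℝ)) * (2 : ℝ) ^ c := by
        rw [Real.rpow_add two_pos]; ring
    _ ≤ 21 * 3 * (2 : ℝ) ^ c := by
        gcongr; exact add_one_mul_two_rpow_neg_half_le n.cast_nonneg
    _ = 63 * (2 : ℝ) ^ c := by norm_num

def dyadicWeight (r r₀ : ℝ) (k m : ℕ) : ℝ :=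
  ((m : ℝ) + 1) * (2 : ℝ) ^ (-r * (m : ℝ)) +
    max (((m : ℝ) + 1) * (2 : ℝ) ^ ((k : ℝ) * (1 / 2 - 2 * r) + (m : ℝ) * (r - 1 / 2)))
      ((2 : ℝ) ^ ((r₀ - 1 / 2 - r) * (m : ℝ)))

theorem dyadicWeight_le {r r₀ : ℝ} (hr : 1 / 2 ≤ r) (hr₀ : r₀ ≤ r + 1 / 2) {k m : ℕ}
    (hm : m ≤ k + 20) : dyadicWeight r r₀ k m ≤ 126 * (2 : ℝ) ^ (20 * (r - 1 / 2)) := by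
  have hm' : (m : ℝ) ≤ k + 20 := by exact_mod_cast hm
  have h₁ : ((m : ℝ) + 1) * (2 : ℝ) ^ (-r * (m : ℝ)) ≤ 63 * (2 : ℝ) ^ (20 * (r - 1 / 2)) :=
    succ_mul_two_rpow_le (n := m) (by omega) (by nlinarith [m.cast_nonneg (α := ℝ)])
  have h₂ : ((m : ℝ) + 1) * (2 : ℝ) ^ ((k : ℝ) * (1 / 2 - 2 * r) + (m : ℝ) * (r - 1 / 2)) ≤
      63 * (2 : ℝ) ^ (20 * (r - 1 / 2)) :=
    -- for `m ≤ k + 20` the exponent is at most `-r k + 20 (r - 1/2)`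
    succ_mul_two_rpow_le hm (by nlinarith [k.cast_nonneg (α := ℝ)])
  have h₃ : (2 : ℝ) ^ ((r₀ - 1 / 2 - r) * (m : ℝ)) ≤ 1 :=
    Real.rpow_le_one_of_one_le_of_nonpos one_le_two
      (mul_nonpos_of_nonpos_of_nonneg (by linarith) m.cast_nonneg)
  have hc : 1 ≤ (2 : ℝ) ^ (20 * (r - 1 / 2)) := Real.one_le_rpow one_le_two (by linarith)
  have := max_le h₂ (h₃.trans (by linarith))
  unfold dyadicWeight
  linarith

theorem Gwt_le_dyadicWeight (r r₀ : ℝ) (k k₁ k₂ : ℕ) :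
    Gwt r r₀ k k₁ k₂ ≤
      (if |(k : ℤ) - k₂| ≤ 10 then dyadicWeight r r₀ k k₁ else 0) +
      (if |(k : ℤ) - k₁| ≤ 10 then dyadicWeight r r₀ k k₂ else 0) +
      (if |(k₁ : ℤ) - k₂| ≤ 10 then dyadicWeight r r₀ k₁ k else 0) := by
  unfold Gwt dyadicWeight
  refine add_le_add le_rfl ?_
  split_ifs
  · rw [sub_right_comm r₀ r]
    gcongr
    exact le_mul_of_one_le_left (by positivity) (by linarith [k.cast_nonneg (α := ℝ)])
  · exact le_rfl

theorem Gwt_le_of_nearMax {r r₀ : ℝ} (hr : 1 / 2 ≤ r) (hr₀ : r₀ ≤ r + 1 / 2) {k k₁ k₂ : ℕ}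
    (h : nearMax k k₁ k₂) : Gwt r r₀ k k₁ k₂ ≤ 3 * (126 * (2 : ℝ) ^ (20 * (r - 1 / 2))) := by
  have hbranch : ∀ (P : Prop) [Decidable P] (n m : ℕ), (P → m ≤ n + 20) →
      (if P then dyadicWeight r r₀ n m else 0) ≤ 126 * (2 : ℝ) ^ (20 * (r - 1 / 2)) := by
    intro P _ n m hP
    split_ifs with hp
    · exact dyadicWeight_le hr hr₀ (hP hp)
    · positivity
  unfold nearMax at h
  have h₁ := hbranch (|(k : ℤ) - k₂| ≤ 10) k k₁ (fun hc => by rw [abs_le] at hc; omega)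
  have h₂ := hbranch (|(k : ℤ) - k₁| ≤ 10) k k₂ (fun hc => by rw [abs_le] at hc; omega)
  have h₃ := hbranch (|(k₁ : ℤ) - k₂| ≤ 10) k₁ k (fun hc => by rw [abs_le] at hc; omega)
  linarith [Gwt_le_dyadicWeight r r₀ k k₁ k₂]

theorem stmt17 (r r₀ : ℝ) (hr : 1 / 2 ≤ r) (hr₀ : r₀ ≤ r + 1 / 2) :
    propertyG (Gwt r r₀) :=
  propertyG_of_le_of_nearMax _ fun _ _ _ => Gwt_le_of_nearMax hr hr₀
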